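/- Let $(S,I)$ be a positive classical solution of the equilibrium system $d_I\Delta I+\beta(x)\frac{SI}{S+I}-\gamma(x)I=0$ coupled with $\nabla\cdot(d_S\nabla S+\chi S\nabla I)-\beta(x)\frac{SI}{S+I}+\gamma(x)I+\Lambda(x)-S=0$ on a bounded smooth domain $\Omega$ with homogeneous Neumann boundary conditions. Then $\int_\Omega S\,dx=\int_\Omega\Lambda\,dx$, and moreover $\gamma_*\int_\Omega I\,dx\le\beta^*\int_\Omega\Lambda\,dx$, where $\gamma_*=\min_{\overline\Omega}\gamma>0$ and $\beta^*=\max_{\overline\Omega}\beta$. -/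

import Mathlib

open MeasureTheory

/-- The divergence of a vector field on `EuclideanSpace ℝ (Fin n)`:
`div F x = ∑ i ∂ᵢ Fᵢ (x)`. -/
noncomputable def vdiv {n : ℕ} (F : EuclideanSpace ℝ (Fin n) → EuclideanSpace ℝ (Fin n))
    (x : EuclideanSpace ℝ (Fin n)) : ℝ :=
  ∑ i : Fin n, (fderiv ℝ F x (EuclideanSpace.single i (1 : ℝ))) i

/-- The Laplacian `Δf = ∇·(∇f)`. -/
noncomputable def lap {n : ℕ} (f : EuclideanSpace ℝ (Fin n) → ℝ)
    (x : EuclideanSpace ℝ (Fin n)) : ℝ :=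
  vdiv (fun y => gradient f y) x

/-!
Terms in divergence form integrate to zero over `Ω` under the no-flux boundary conditions. Adding
the two equations leaves `S = Λ` plus such terms, hence `∫ S = ∫ Λ`. The `I`-equation alone gives
`∫ γ I = ∫ β SI/(S+I)`, and `SI/(S+I) ≤ S` bounds the right-hand side by `β* ∫ S = β* ∫ Λ`.
-/

lemma mul_div_add_le_left {a b : ℝ} (ha : 0 ≤ a) (hb : 0 ≤ b) : a * b / (a + b) ≤ a := by
  rcases (add_nonneg ha hb).eq_or_lt with hab | hab
  · rw [← hab, div_zero]
    exact ha
  · rw [div_le_iff₀ hab]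
    nlinarith

lemma contDiff_gradient {E : Type*} [NormedAddCommGroup E] [InnerProductSpace ℝ E] [CompleteSpace E]
    {f : E → ℝ} {m k : WithTop ℕ∞} (hf : ContDiff ℝ k f) (hmk : m + 1 ≤ k) :
    ContDiff ℝ m (fun y => gradient f y) :=
  (InnerProductSpace.toDual ℝ E).symm.toContinuousLinearEquiv.contDiff.comp (hf.fderiv_right hmk)

lemma continuous_vdiv {n : ℕ} {F : EuclideanSpace ℝ (Fin n) → EuclideanSpace ℝ (Fin n)}
    (hF : ContDiff ℝ 1 F) : Continuous (vdiv F) :=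
  continuous_finsetSum _ fun i _ => (EuclideanSpace.proj i).continuous.comp
    ((ContinuousLinearMap.apply ℝ _ (EuclideanSpace.single i (1 : ℝ))).continuous.comp
      (hF.continuous_fderiv one_ne_zero))

lemma Bornology.IsBounded.integrableOn_of_continuousOn_closure {X : Type*} [MetricSpace X]
    [ProperSpace X] [MeasurableSpace X] [OpensMeasurableSpace X] {μ : Measure X}
    [IsLocallyFiniteMeasure μ] {s : Set X} (hs : Bornology.IsBounded s)
    {f : X → ℝ} (hf : ContinuousOn f (closure s)) : IntegrableOn f s μ :=
  (hf.integrableOn_compact hs.isCompact_closure).mono_set subset_closure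

section SetIntegral

variable {α : Type*} [MeasurableSpace α] {μ : Measure α} {s : Set α}

lemma setIntegral_eq_of_eq_add {f g h : α → ℝ} (hs : MeasurableSet s) (hg : IntegrableOn g s μ)
    (hh : IntegrableOn h s μ) (hh0 : ∫ x in s, h x ∂μ = 0) (hfgh : ∀ x ∈ s, f x = g x + h x) :
    ∫ x in s, f x ∂μ = ∫ x in s, g x ∂μ := by
  rw [setIntegral_congr_fun hs hfgh, integral_add hg hh, hh0, add_zero]

lemma measure_eq_zero_of_setIntegral_nonpos {f : α → ℝ} (hs : MeasurableSet s)
    (hf : IntegrableOn f s μ) (hpos : ∀ x ∈ s, 0 < f x) (hint : ∫ x in s, f x ∂μ ≤ 0) :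
    μ s = 0 := by
  by_contra hμ
  have hsupp : Function.support f ∩ s = s :=
    Set.inter_eq_right.mpr fun x hx => (hpos x hx).ne'
  have hfpos : 0 < ∫ x in s, f x ∂μ :=
    (setIntegral_pos_iff_support_of_nonneg_ae
      (ae_restrict_of_forall_mem hs fun x hx => (hpos x hx).le) hf).mpr
      (by rw [hsupp]; exact pos_iff_ne_zero.mpr hμ)
  linarith

lemma mul_setIntegral_le_of_setIntegral_eq {S I β γ : α → ℝ} {γlow βup : ℝ}
    (hs : MeasurableSet s) (hγlow : 0 < γlow)
    (hSi : IntegrableOn S s μ) (hIi : IntegrableOn I s μ)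
    (hγIi : IntegrableOn (fun x => γ x * I x) s μ)
    (hβi : IntegrableOn (fun x => β x * (S x * I x / (S x + I x))) s μ)
    (hS : ∀ x ∈ s, 0 ≤ S x) (hI : ∀ x ∈ s, 0 < I x)
    (hγ : ∀ x ∈ s, γlow ≤ γ x) (hβ : ∀ x ∈ s, β x ≤ βup)
    (hbal : ∫ x in s, γ x * I x ∂μ = ∫ x in s, β x * (S x * I x / (S x + I x)) ∂μ) :
    γlow * ∫ x in s, I x ∂μ ≤ βup * ∫ x in s, S x ∂μ := by
  have hquot : ∀ x ∈ s, 0 ≤ S x * I x / (S x + I x) := fun x hx =>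
    div_nonneg (mul_nonneg (hS x hx) (hI x hx).le) (add_nonneg (hS x hx) (hI x hx).le)
  have hlow : γlow * ∫ x in s, I x ∂μ ≤ ∫ x in s, β x * (S x * I x / (S x + I x)) ∂μ := by
    rw [← hbal, ← integral_const_mul]
    exact setIntegral_mono_on (hIi.const_mul γlow) hγIi hs fun x hx =>
      mul_le_mul_of_nonneg_right (hγ x hx) (hI x hx).le
  rcases le_or_gt 0 βup with hβup | hβup
  · calc γlow * ∫ x in s, I x ∂μ
        ≤ ∫ x in s, β x * (S x * I x / (S x + I x)) ∂μ := hlow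
      _ ≤ ∫ x in s, βup * S x ∂μ := setIntegral_mono_on hβi (hSi.const_mul βup) hs fun x hx =>
          (mul_le_mul_of_nonneg_right (hβ x hx) (hquot x hx)).trans
            (mul_le_mul_of_nonneg_left (mul_div_add_le_left (hS x hx) (hI x hx).le) hβup)
      _ = βup * ∫ x in s, S x ∂μ := integral_const_mul βup _
  · -- a negative `βup` is only possible on a null set: the balance then forces `∫ I ≤ 0`
    have hneg : ∫ x in s, β x * (S x * I x / (S x + I x)) ∂μ ≤ 0 := setIntegral_nonpos hs
      fun x hx => mul_nonpos_of_nonpos_of_nonneg ((hβ x hx).trans hβup.le) (hquot x hx)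
    have hnull : μ s = 0 := measure_eq_zero_of_setIntegral_nonpos hs hIi hI
      (nonpos_of_mul_nonpos_right (hlow.trans hneg) hγlow)
    simp [Measure.restrict_eq_zero.mpr hnull]

end SetIntegral

theorem stmt_16_general {n : ℕ} (Ω : Set (EuclideanSpace ℝ (Fin n)))
    (hΩbdd : Bornology.IsBounded Ω) (hΩm : MeasurableSet Ω)
    (ν : EuclideanSpace ℝ (Fin n) → EuclideanSpace ℝ (Fin n))
    -- the divergence theorem on the bounded smooth domain `Ω` with outward unit
    -- normal `ν`: a `C¹` vector field with vanishing normal trace has vanishing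
    -- integral of its divergence
    (hdivthm : ∀ F : EuclideanSpace ℝ (Fin n) → EuclideanSpace ℝ (Fin n),
      ContDiff ℝ 1 F → (∀ x ∈ frontier Ω, inner ℝ (F x) (ν x) = (0 : ℝ)) →
      (∫ x in Ω, vdiv F x) = 0)
    (dS dI χ : ℝ)
    (S I β γ Λ : EuclideanSpace ℝ (Fin n) → ℝ)
    (hS : ContDiff ℝ 2 S) (hI : ContDiff ℝ 2 I)
    (hβ : Continuous β) (hγ : Continuous γ) (hΛ : Continuous Λ)
    (hSpos : ∀ x ∈ closure Ω, 0 < S x) (hIpos : ∀ x ∈ closure Ω, 0 < I x)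
    -- the S-equation: ∇·(d_S ∇S + χ S ∇I) - β SI/(S+I) + γ I + Λ - S = 0 in Ω
    (heqS : ∀ x ∈ Ω,
      vdiv (fun y => dS • gradient S y + (χ * S y) • gradient I y) x
        - β x * (S x * I x / (S x + I x)) + γ x * I x + Λ x - S x = 0)
    -- the I-equation: d_I ΔI + β SI/(S+I) - γ I = 0 in Ω
    (heqI : ∀ x ∈ Ω,
      dI * lap I x + β x * (S x * I x / (S x + I x)) - γ x * I x = 0)
    -- homogeneous Neumann boundary conditions
    (hbcS : ∀ x ∈ frontier Ω, inner ℝ (gradient S x) (ν x) = (0 : ℝ))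
    (hbcI : ∀ x ∈ frontier Ω, inner ℝ (gradient I x) (ν x) = (0 : ℝ))
    (γlow βup : ℝ) (hγlow : 0 < γlow)
    (hγ_min : ∀ x ∈ closure Ω, γlow ≤ γ x) (hβ_max : ∀ x ∈ closure Ω, β x ≤ βup) :
    (∫ x in Ω, S x) = ∫ x in Ω, Λ x ∧
    γlow * ∫ x in Ω, I x ≤ βup * ∫ x in Ω, Λ x := by
  have integ {f : EuclideanSpace ℝ (Fin n) → ℝ} (hf : ContinuousOn f (closure Ω)) :
      IntegrableOn f Ω := hΩbdd.integrableOn_of_continuousOn_closure hf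
  have hSc := hS.continuous.continuousOn (s := closure Ω)
  have hIc := hI.continuous.continuousOn (s := closure Ω)
  have hflux : ContDiff ℝ 1 (fun y => dS • gradient S y + (χ * S y) • gradient I y) :=
    ((contDiff_const (c := dS)).smul (contDiff_gradient hS le_rfl)).add
      (((contDiff_const (c := χ)).mul (hS.of_le one_le_two)).smul (contDiff_gradient hI le_rfl))
  have hflux0 := hdivthm _ hflux fun x hx => by
    simp only [inner_add_left, real_inner_smul_left, hbcS x hx, hbcI x hx, mul_zero, add_zero]
  have hlap0 : ∫ x in Ω, dI * lap I x = 0 := by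
    rw [integral_const_mul, show ∫ x in Ω, lap I x = 0 from
      hdivthm _ (contDiff_gradient hI le_rfl) hbcI, mul_zero]
  have hlapi : IntegrableOn (fun x => dI * lap I x) Ω :=
    (integ (continuous_vdiv (contDiff_gradient hI le_rfl)).continuousOn).const_mul dI
  have hfluxi := integ (continuous_vdiv hflux).continuousOn
  have hmass : ∫ x in Ω, S x = ∫ x in Ω, Λ x :=
    setIntegral_eq_of_eq_add (h := fun x => vdiv _ x + dI * lap I x) hΩm
      (integ hΛ.continuousOn) (hfluxi.add hlapi)
      (by rw [integral_add hfluxi hlapi, hflux0, hlap0, add_zero])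
      fun x hx => by linarith [heqS x hx, heqI x hx]
  have hquot : ContinuousOn (fun x => S x * I x / (S x + I x)) (closure Ω) :=
    (hSc.mul hIc).div (hSc.add hIc) fun x hx => (add_pos (hSpos x hx) (hIpos x hx)).ne'
  have hbal := setIntegral_eq_of_eq_add (f := fun x => γ x * I x)
    (g := fun x => β x * (S x * I x / (S x + I x))) hΩm (integ (hβ.continuousOn.mul hquot))
    hlapi hlap0 fun x hx => by linarith [heqI x hx]
  refine ⟨hmass, hmass ▸ mul_setIntegral_le_of_setIntegral_eq hΩm hγlow (integ hSc) (integ hIc)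
    (integ (hγ.continuousOn.mul hIc)) (integ (hβ.continuousOn.mul hquot))
    (fun x hx => (hSpos x (subset_closure hx)).le) (fun x hx => hIpos x (subset_closure hx))
    (fun x hx => hγ_min x (subset_closure hx)) (fun x hx => hβ_max x (subset_closure hx)) hbal⟩

theorem stmt_16 {n : ℕ} (Ω : Set (EuclideanSpace ℝ (Fin n)))
    (hΩopen : IsOpen Ω) (hΩbdd : Bornology.IsBounded Ω) (hΩm : MeasurableSet Ω)
    (ν : EuclideanSpace ℝ (Fin n) → EuclideanSpace ℝ (Fin n))
    -- the divergence theorem on the bounded smooth domain `Ω` with outward unit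
    -- normal `ν`: a `C¹` vector field with vanishing normal trace has vanishing
    -- integral of its divergence
    (hdivthm : ∀ F : EuclideanSpace ℝ (Fin n) → EuclideanSpace ℝ (Fin n),
      ContDiff ℝ 1 F → (∀ x ∈ frontier Ω, inner ℝ (F x) (ν x) = (0 : ℝ)) →
      (∫ x in Ω, vdiv F x) = 0)
    (dS dI χ : ℝ) (hdS : 0 < dS) (hdI : 0 < dI) (hχ : 0 < χ)
    (S I β γ Λ : EuclideanSpace ℝ (Fin n) → ℝ)
    (hS : ContDiff ℝ 2 S) (hI : ContDiff ℝ 2 I)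
    (hβ : Continuous β) (hγ : Continuous γ) (hΛ : Continuous Λ)
    (hSpos : ∀ x ∈ closure Ω, 0 < S x) (hIpos : ∀ x ∈ closure Ω, 0 < I x)
    -- the S-equation: ∇·(d_S ∇S + χ S ∇I) - β SI/(S+I) + γ I + Λ - S = 0 in Ω
    (heqS : ∀ x ∈ Ω,
      vdiv (fun y => dS • gradient S y + (χ * S y) • gradient I y) x
        - β x * (S x * I x / (S x + I x)) + γ x * I x + Λ x - S x = 0)
    -- the I-equation: d_I ΔI + β SI/(S+I) - γ I = 0 in Ω
    (heqI : ∀ x ∈ Ω,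
      dI * lap I x + β x * (S x * I x / (S x + I x)) - γ x * I x = 0)
    -- homogeneous Neumann boundary conditions
    (hbcS : ∀ x ∈ frontier Ω, inner ℝ (gradient S x) (ν x) = (0 : ℝ))
    (hbcI : ∀ x ∈ frontier Ω, inner ℝ (gradient I x) (ν x) = (0 : ℝ))
    (γlow βup : ℝ) (hγlow : 0 < γlow)
    (hγ_min : ∀ x ∈ closure Ω, γlow ≤ γ x) (hβ_max : ∀ x ∈ closure Ω, β x ≤ βup) :
    (∫ x in Ω, S x) = ∫ x in Ω, Λ x ∧
    γlow * ∫ x in Ω, I x ≤ βup * ∫ x in Ω, Λ x :=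
  stmt_16_general Ω hΩbdd hΩm ν hdivthm dS dI χ S I β γ Λ hS hI hβ hγ hΛ hSpos hIpos heqS heqI hbcS
    hbcI γlow βup hγlow hγ_min hβ_max
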